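/- arXiv:2511.07975 — 2 statements merged into one kernel-verified Lean document; each statement's English description precedes it below -/
import Mathlib

section
/- Let I ⊆ ℝ be an open interval and let F, F₀ : ℝ → ℝ be continuously differentiable on I with derivatives f, f₀ satisfying f(p) > 0, f₀(p) > 0, F(p) < 1 and F₀(p) < 1 for every p ∈ I. Assume p ↦ log(1 − F(p)) and p ↦ log(1 − F₀(p)) are concave on I, and assume the hazard-rate dominance condition (1 − F(p))/f(p) < (1 − F₀(p))/f₀(p) for every p ∈ I. If p*, p₀* ∈ I satisfy the first-order conditions p* = (1 − F(p*))/f(p*) and p₀* = (1 − F₀(p₀*))/f₀(p₀*), then p* < p₀*. -/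
/-- Lemma 2: under log-concavity of both survival functions and hazard-rate
dominance of `F` by `F₀`, the solutions of the first-order conditions satisfy
`p* < p₀*`. -/
theorem optimal_price_decreases
    (I : Set ℝ) (hIopen : IsOpen I) (hIconn : I.OrdConnected)
    (F F₀ f f₀ : ℝ → ℝ)
    (hderiv : ∀ p ∈ I, HasDerivAt F (f p) p)
    (hderiv₀ : ∀ p ∈ I, HasDerivAt F₀ (f₀ p) p)
    (hfcont : ContinuousOn f I) (hf₀cont : ContinuousOn f₀ I)
    (hfpos : ∀ p ∈ I, 0 < f p) (hf₀pos : ∀ p ∈ I, 0 < f₀ p)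
    (hFlt : ∀ p ∈ I, F p < 1) (hF₀lt : ∀ p ∈ I, F₀ p < 1)
    (hconc : ConcaveOn ℝ I (fun p => Real.log (1 - F p)))
    (hconc₀ : ConcaveOn ℝ I (fun p => Real.log (1 - F₀ p)))
    (hdom : ∀ p ∈ I, (1 - F p) / f p < (1 - F₀ p) / f₀ p)
    (pstar p₀star : ℝ) (hps : pstar ∈ I) (hp₀s : p₀star ∈ I)
    (hfoc : pstar = (1 - F pstar) / f pstar)
    (hfoc₀ : p₀star = (1 - F₀ p₀star) / f₀ p₀star) :
    pstar < p₀star := by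
  by_contra hle
  push_neg at hle  -- p₀star ≤ pstar
  rcases eq_or_lt_of_le hle with heq | hlt
  · -- p₀star = pstar
    have := hdom pstar hps
    rw [← hfoc, ← heq, ← hfoc₀] at this
    exact lt_irrefl _ this
  · -- p₀star < pstar
    have hS₀ : ∀ p ∈ I, (0:ℝ) < 1 - F₀ p := fun p hp => by linarith [hF₀lt p hp]
    have hd : ∀ p ∈ I, HasDerivAt (fun q => Real.log (1 - F₀ q)) (-f₀ p / (1 - F₀ p)) p := by
      intro p hp
      have h1 : HasDerivAt (fun q => 1 - F₀ q) (-f₀ p) p := (hderiv₀ p hp).const_sub 1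
      exact h1.log (ne_of_gt (hS₀ p hp))
    have hlow : -f₀ pstar / (1 - F₀ pstar) ≤ slope (fun q => Real.log (1 - F₀ q)) p₀star pstar :=
      hconc₀.le_slope_of_hasDerivAt hp₀s hps hlt (hd pstar hps)
    have hup : slope (fun q => Real.log (1 - F₀ q)) p₀star pstar ≤ -f₀ p₀star / (1 - F₀ p₀star) :=
      hconc₀.slope_le_of_hasDerivAt hp₀s hps hlt (hd p₀star hp₀s)
    have hkey : -f₀ pstar / (1 - F₀ pstar) ≤ -f₀ p₀star / (1 - F₀ p₀star) := hlow.trans hup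
    have hSs := hS₀ pstar hps
    have hS₀s := hS₀ p₀star hp₀s
    have hfs := hf₀pos pstar hps
    have hf₀star := hf₀pos p₀star hp₀s
    -- cross multiply: f₀ p₀star * (1 - F₀ pstar) ≤ f₀ pstar * (1 - F₀ p₀star)
    have hcross : f₀ p₀star * (1 - F₀ pstar) ≤ f₀ pstar * (1 - F₀ p₀star) := by
      rw [div_le_div_iff₀ hSs hS₀s] at hkey
      nlinarith
    have hhaz : (1 - F₀ pstar) / f₀ pstar ≤ (1 - F₀ p₀star) / f₀ p₀star := by
      rw [div_le_div_iff₀ hfs hf₀star]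
      nlinarith
    have : pstar < pstar := by
      calc pstar = (1 - F pstar) / f pstar := hfoc
        _ < (1 - F₀ pstar) / f₀ pstar := hdom pstar hps
        _ ≤ (1 - F₀ p₀star) / f₀ p₀star := hhaz
        _ = p₀star := hfoc₀.symm
        _ < pstar := hlt
    exact lt_irrefl _ this
end

section
/- Let k, t, c be natural numbers with 1 ≤ c, and t + c ≤ k. Fix a t-element subset T of a k-element set S, and let C be a c-element subset of S chosen uniformly at random. Then the probability that C intersects T satisfies P(C ∩ T ≠ ∅) ≤ 1 − ((k − c + 1 − t)/(k − c + 1))^c. -/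
lemma choose_ratio_lower (k t c : ℕ) (hc1 : 1 ≤ c) (htck : t + c ≤ k) :
    (((k : ℝ) - c + 1 - t) / ((k : ℝ) - c + 1)) ^ c
      ≤ ((k - t).choose c : ℝ) / (k.choose c : ℝ) := by
  have hck : c ≤ k := by omega
  have hctk : c ≤ k - t := by omega
  have hkc : (c : ℝ) ≤ k := by exact_mod_cast hck
  have hden : (0 : ℝ) < (k : ℝ) - c + 1 := by linarith
  have htR : (t : ℝ) + c ≤ k := by exact_mod_cast htck
  have hnum : (0 : ℝ) ≤ (k : ℝ) - c + 1 - t := by linarith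
  have h1 : (k.descFactorial c : ℝ) = ∏ i ∈ Finset.range c, ((k : ℝ) - i) := by
    rw [Nat.descFactorial_eq_prod_range, Nat.cast_prod]
    exact Finset.prod_congr rfl fun i hi => by
      rw [Nat.cast_sub (by simp at hi; omega)]
  have h2 : ((k - t).descFactorial c : ℝ) = ∏ i ∈ Finset.range c, ((k : ℝ) - t - i) := by
    rw [Nat.descFactorial_eq_prod_range, Nat.cast_prod]
    exact Finset.prod_congr rfl fun i hi => by
      simp at hi
      rw [Nat.cast_sub (by omega), Nat.cast_sub (by omega)]
  have hc3 : ((k - t).choose c : ℝ) / (k.choose c : ℝ)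
      = ((k - t).descFactorial c : ℝ) / (k.descFactorial c : ℝ) := by
    rw [Nat.descFactorial_eq_factorial_mul_choose, Nat.descFactorial_eq_factorial_mul_choose]
    push_cast
    rw [mul_div_mul_left]
    positivity
  rw [hc3, h1, h2, ← Finset.prod_div_distrib]
  have hpow : (((k : ℝ) - c + 1 - t) / ((k : ℝ) - c + 1)) ^ c
      = ∏ _i ∈ Finset.range c, (((k : ℝ) - c + 1 - t) / ((k : ℝ) - c + 1)) := by
    rw [Finset.prod_const, Finset.card_range]
  rw [hpow]
  apply Finset.prod_le_prod
  · intro i _; positivity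
  · intro i hi
    simp only [Finset.mem_range] at hi
    have hiR : (i : ℝ) ≤ (c : ℝ) - 1 := by
      have : (i : ℝ) + 1 ≤ c := by exact_mod_cast hi
      linarith
    have hposi : (0 : ℝ) < (k : ℝ) - i := by linarith
    rw [div_le_div_iff₀ hden hposi]
    nlinarith [Nat.cast_nonneg (α := ℝ) t, Nat.cast_nonneg (α := ℝ) i]

/-- Theorem 5 (upper bound): if `t` of the `k` blocks are falsified and `c`
blocks are challenged uniformly at random (with `t + c ≤ k`), the probability
that at least one falsified block is challenged is at most
`1 - ((k - c + 1 - t)/(k - c + 1))^c`. -/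
theorem detection_probability_upper_bound
    {α : Type*} [DecidableEq α] (k t c : ℕ) (S T : Finset α)
    (hTS : T ⊆ S) (hk : S.card = k) (ht : T.card = t)
    (hc1 : 1 ≤ c) (htck : t + c ≤ k) :
    (((S.powersetCard c).filter (fun C => (C ∩ T).Nonempty)).card : ℝ) /
        ((S.powersetCard c).card : ℝ) ≤
      1 - (((k : ℝ) - c + 1 - t) / ((k : ℝ) - c + 1)) ^ c := by
  classical
  have hNcard : (S.powersetCard c).card = k.choose c := by
    rw [Finset.card_powersetCard, hk]
  have hfilt : (S.powersetCard c).filter (fun C => ¬(C ∩ T).Nonempty)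
      = (S \ T).powersetCard c := by
    ext C
    simp only [Finset.mem_filter, Finset.mem_powersetCard,
      Finset.not_nonempty_iff_eq_empty, Finset.subset_sdiff]
    constructor
    · rintro ⟨⟨hCS, hCc⟩, hE⟩
      exact ⟨⟨hCS, Finset.disjoint_iff_inter_eq_empty.mpr hE⟩, hCc⟩
    · rintro ⟨⟨hCS, hd⟩, hCc⟩
      exact ⟨⟨hCS, hCc⟩, Finset.disjoint_iff_inter_eq_empty.mp hd⟩
  have hM : ((S.powersetCard c).filter (fun C => ¬(C ∩ T).Nonempty)).card
      = (k - t).choose c := by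
    rw [hfilt, Finset.card_powersetCard, Finset.card_sdiff_of_subset hTS, hk, ht]
  have hsplit : ((S.powersetCard c).filter (fun C => (C ∩ T).Nonempty)).card
      + (k - t).choose c = k.choose c := by
    rw [← hM, ← hNcard, Finset.card_filter_add_card_filter_not]
  have hNpos : 0 < k.choose c := Nat.choose_pos (by omega)
  have hNR : (0 : ℝ) < (k.choose c : ℝ) := by exact_mod_cast hNpos
  have hsplitR : (((S.powersetCard c).filter (fun C => (C ∩ T).Nonempty)).card : ℝ)
      + ((k - t).choose c : ℝ) = (k.choose c : ℝ) := by exact_mod_cast hsplit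
  have hkey := choose_ratio_lower k t c hc1 htck
  rw [hNcard]
  rw [div_le_iff₀ hNR]
  have h2 : (((k : ℝ) - c + 1 - t) / ((k : ℝ) - c + 1)) ^ c * (k.choose c : ℝ)
      ≤ ((k - t).choose c : ℝ) := (le_div_iff₀ hNR).mp hkey
  nlinarith
end
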